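/- arXiv:math/0612733 — 2 statements merged into one kernel-verified Lean document; each statement's English description precedes it below -/
import Mathlib

section
/- With the intertwiner Φ = x_n t_{s_{n−1}} t_{s_{n−2}} ⋯ t_{s_1} ∈ H: z_i Φ = Φ z_{i+1} for 1 ≤ i ≤ n−1; z_n Φ = Φ (z_1 + κ − Σ_{j=0}^{r−1} (d_{j−1} − d_{j−2}) ε_{1j}); t_{ζ_i} Φ = Φ t_{ζ_{i+1}} for 1 ≤ i ≤ n−1; and t_{ζ_n} Φ = ζ^{−1} Φ t_{ζ_1}. -/
/-- `ζ = e^{2πi/r}`. -/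
noncomputable def zeta (r : ℕ) : ℂ := Complex.exp (2 * Real.pi * Complex.I / r)

theorem zeta_pow_self {r : ℕ} (hr : 0 < r) : zeta r ^ r = 1 := by
  rw [zeta, ← Complex.exp_nat_mul, mul_comm, div_mul_cancel₀, Complex.exp_two_pi_mul_I]
  exact_mod_cast Nat.cast_ne_zero.mpr hr.ne'

theorem zeta_zpow_root (r : ℕ) (l : ℤ) : (zeta r ^ l) ^ r = 1 := by
  rcases Nat.eq_zero_or_pos r with h | h
  · rw [h, pow_zero]
  · rw [← zpow_natCast, ← zpow_mul, mul_comm, zpow_mul, zpow_natCast,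
      zeta_pow_self h, one_zpow]

/-- The elements of `G(r,1,n)`: `n × n` monomial matrices whose nonzero entries are
`r`-th roots of unity. -/
def IsGMonomial (r n : ℕ) (w : Matrix (Fin n) (Fin n) ℂ) : Prop :=
  ∃ (σ : Equiv.Perm (Fin n)) (a : Fin n → ℂ), (∀ i, a i ^ r = 1) ∧
    ∀ i j, w i j = if i = σ j then a j else 0

theorem IsGMonomial.mul {r n : ℕ} {w v : Matrix (Fin n) (Fin n) ℂ}
    (hw : IsGMonomial r n w) (hv : IsGMonomial r n v) : IsGMonomial r n (w * v) := by
  obtain ⟨σ, a, ha, hwe⟩ := hw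
  obtain ⟨τ, b, hb, hve⟩ := hv
  refine ⟨σ * τ, fun j => a (τ j) * b j, fun j => by rw [mul_pow, ha, hb, one_mul], ?_⟩
  intro i j
  rw [Matrix.mul_apply, Finset.sum_eq_single (τ j)]
  · rw [hwe, hve, if_pos rfl, Equiv.Perm.mul_apply]
    simp [ite_mul]
  · intro k _ hk
    rw [hve, if_neg hk, mul_zero]
  · simp

/-- The diagonal matrix `ζ_i^l`, with `ζ^l` in position `i` and `1`'s elsewhere. -/
noncomputable def zmat (r n : ℕ) (i : Fin n) (l : ℤ) : Matrix (Fin n) (Fin n) ℂ :=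
  Matrix.diagonal (fun a => if a = i then zeta r ^ l else 1)

theorem isGMonomial_zmat (r : ℕ) {n : ℕ} (i : Fin n) (l : ℤ) :
    IsGMonomial r n (zmat r n i l) := by
  refine ⟨1, fun b => if b = i then zeta r ^ l else 1, ?_, ?_⟩
  · intro b
    dsimp only
    split
    · exact zeta_zpow_root r l
    · exact one_pow r
  · intro a b
    rcases eq_or_ne a b with h | h
    · subst h; simp [zmat, Matrix.diagonal_apply]
    · simp [zmat, Matrix.diagonal_apply_ne _ h, Equiv.Perm.one_apply, h]

/-- The transposition (permutation) matrix `s_{ij}` interchanging coordinates `i` and `j`. -/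
def smat {n : ℕ} (i j : Fin n) : Matrix (Fin n) (Fin n) ℂ :=
  Matrix.of fun a b => if a = Equiv.swap i j b then 1 else 0

theorem isGMonomial_smat (r : ℕ) {n : ℕ} (i j : Fin n) : IsGMonomial r n (smat i j) :=
  ⟨Equiv.swap i j, fun _ => 1, fun _ => one_pow r, fun a b => by simp [smat]⟩

/-- The group `G(r,1,n)` of monomial matrices, as a subtype of matrices. -/
def GMon (r n : ℕ) : Type := {w : Matrix (Fin n) (Fin n) ℂ // IsGMonomial r n w}

/-- `ζ_i^l` as an element of `G(r,1,n)`. -/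
noncomputable def zetaW (r : ℕ) {n : ℕ} (i : Fin n) (l : ℤ) : GMon r n :=
  ⟨zmat r n i l, isGMonomial_zmat r i l⟩

/-- `s_{ij}` as an element of `G(r,1,n)`. -/
noncomputable def sW (r : ℕ) {n : ℕ} (i j : Fin n) : GMon r n :=
  ⟨smat i j, isGMonomial_smat r i j⟩

/-- The reflection `ζ_i^l s_{ij} ζ_i^{-l}` as an element of `G(r,1,n)`. -/
noncomputable def reflW (r : ℕ) {n : ℕ} (i j : Fin n) (l : ℤ) : GMon r n :=
  ⟨zmat r n i l * smat i j * zmat r n i (-l),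
    ((isGMonomial_zmat r i l).mul (isGMonomial_smat r i j)).mul (isGMonomial_zmat r i (-l))⟩

/-- The element `ζ_i^l ζ_j^{-l}` of `G(r,1,n)`. -/
noncomputable def pairW (r : ℕ) {n : ℕ} (i j : Fin n) (l : ℤ) : GMon r n :=
  ⟨zmat r n i l * zmat r n j (-l),
    (isGMonomial_zmat r i l).mul (isGMonomial_zmat r j (-l))⟩

/-- Generators of the rational Cherednik algebra of `G(r,1,n)`:
`x_1, …, x_n`, `y_1, …, y_n` and `t_w` for `w ∈ G(r,1,n)`. -/
inductive CGen (r n : ℕ) where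
  | X (i : Fin n) : CGen r n
  | Y (i : Fin n) : CGen r n
  | T (w : GMon r n) : CGen r n

/-- The defining relations of the rational Cherednik algebra of `G(r,1,n)` with
parameters `κ, c₀, c_1, …, c_{r-1}`. -/
inductive CRel (r n : ℕ) (κ c₀ : ℂ) (c : ℕ → ℂ) :
    FreeAlgebra ℂ (CGen r n) → FreeAlgebra ℂ (CGen r n) → Prop
  | t_mul (u w v : GMon r n) : u.1 = w.1 * v.1 → CRel r n κ c₀ c
      (FreeAlgebra.ι ℂ (.T u)) (FreeAlgebra.ι ℂ (.T w) * FreeAlgebra.ι ℂ (.T v))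
  | t_one (u : GMon r n) : u.1 = 1 → CRel r n κ c₀ c (FreeAlgebra.ι ℂ (.T u)) 1
  | t_x (w : GMon r n) (i : Fin n) : CRel r n κ c₀ c
      (FreeAlgebra.ι ℂ (.T w) * FreeAlgebra.ι ℂ (.X i))
      (∑ j, (w.1⁻¹ i j) • (FreeAlgebra.ι ℂ (.X j) * FreeAlgebra.ι ℂ (.T w)))
  | t_y (w : GMon r n) (i : Fin n) : CRel r n κ c₀ c
      (FreeAlgebra.ι ℂ (.T w) * FreeAlgebra.ι ℂ (.Y i))
      (∑ j, (w.1 j i) • (FreeAlgebra.ι ℂ (.Y j) * FreeAlgebra.ι ℂ (.T w)))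
  | xx (i j : Fin n) : CRel r n κ c₀ c
      (FreeAlgebra.ι ℂ (.X i) * FreeAlgebra.ι ℂ (.X j))
      (FreeAlgebra.ι ℂ (.X j) * FreeAlgebra.ι ℂ (.X i))
  | yy (i j : Fin n) : CRel r n κ c₀ c
      (FreeAlgebra.ι ℂ (.Y i) * FreeAlgebra.ι ℂ (.Y j))
      (FreeAlgebra.ι ℂ (.Y j) * FreeAlgebra.ι ℂ (.Y i))
  | yx_ne (i j : Fin n) : i ≠ j → CRel r n κ c₀ c
      (FreeAlgebra.ι ℂ (.Y i) * FreeAlgebra.ι ℂ (.X j))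
      (FreeAlgebra.ι ℂ (.X j) * FreeAlgebra.ι ℂ (.Y i) +
        c₀ • ∑ l ∈ Finset.range r,
          (zeta r ^ (-(l : ℤ))) • FreeAlgebra.ι ℂ (.T (reflW r i j (l : ℤ))))
  | yx_eq (i : Fin n) : CRel r n κ c₀ c
      (FreeAlgebra.ι ℂ (.Y i) * FreeAlgebra.ι ℂ (.X i))
      (FreeAlgebra.ι ℂ (.X i) * FreeAlgebra.ι ℂ (.Y i) + κ • (1 : FreeAlgebra ℂ (CGen r n))
        - ∑ l ∈ Finset.Ico 1 r,
            (c l * (1 - zeta r ^ (-(l : ℤ)))) • FreeAlgebra.ι ℂ (.T (zetaW r i (l : ℤ)))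
        - c₀ • ∑ j ∈ Finset.univ.erase i, ∑ l ∈ Finset.range r,
            FreeAlgebra.ι ℂ (.T (reflW r i j (l : ℤ))))

variable (r n : ℕ) (κ c₀ : ℂ) (c : ℕ → ℂ)

/-- The image of `x_i` in the rational Cherednik algebra of `G(r,1,n)`. -/
noncomputable def cX (i : Fin n) : RingQuot (CRel r n κ c₀ c) :=
  RingQuot.mkAlgHom ℂ (CRel r n κ c₀ c) (FreeAlgebra.ι ℂ (.X i))

/-- The image of `y_i` in the rational Cherednik algebra of `G(r,1,n)`. -/
noncomputable def cY (i : Fin n) : RingQuot (CRel r n κ c₀ c) :=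
  RingQuot.mkAlgHom ℂ (CRel r n κ c₀ c) (FreeAlgebra.ι ℂ (.Y i))

/-- The image of `t_w` in the rational Cherednik algebra of `G(r,1,n)`. -/
noncomputable def cT (w : GMon r n) : RingQuot (CRel r n κ c₀ c) :=
  RingQuot.mkAlgHom ℂ (CRel r n κ c₀ c) (FreeAlgebra.ι ℂ (.T w))

/-- `φ_i = Σ_{j<i} Σ_{l=0}^{r-1} t_{ζ_i^l s_{ij} ζ_i^{-l}}`. -/
noncomputable def cPhi (i : Fin n) : RingQuot (CRel r n κ c₀ c) :=
  ∑ j ∈ Finset.univ.filter (fun j : Fin n => j < i), ∑ l ∈ Finset.range r,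
    cT r n κ c₀ c (reflW r i j (l : ℤ))

/-- The Dunkl–Opdam–Cherednik element `z_i = y_i x_i + c₀ φ_i`. -/
noncomputable def cz (i : Fin n) : RingQuot (CRel r n κ c₀ c) :=
  cY r n κ c₀ c i * cX r n κ c₀ c i + c₀ • cPhi r n κ c₀ c i

/-- `π_i = Σ_{l=0}^{r-1} t_{ζ_i^l ζ_{i+1}^{-l}}` (here with the two indices `i`, `i+1`
passed separately). -/
noncomputable def cPi (i j : Fin n) : RingQuot (CRel r n κ c₀ c) :=
  ∑ l ∈ Finset.range r, cT r n κ c₀ c (pairW r i j (l : ℤ))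

/-- The idempotent `ε_{ij} = (1/r) Σ_{l=0}^{r-1} ζ^{-lj} t_{ζ_i^l}`. -/
noncomputable def cEps (i : Fin n) (j : ℤ) : RingQuot (CRel r n κ c₀ c) :=
  (r : ℂ)⁻¹ • ∑ l ∈ Finset.range r, (zeta r ^ (-(l : ℤ) * j)) • cT r n κ c₀ c (zetaW r i (l : ℤ))

/-- The reparametrised constants `d_j = Σ_{l=1}^{r-1} ζ^{lj} c_l`. -/
noncomputable def dpar (j : ℤ) : ℂ := ∑ l ∈ Finset.Ico 1 r, zeta r ^ ((l : ℤ) * j) * c l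

variable (m : ℕ)

/-- The intertwiner `Φ = x_n t_{s_{n-1}} t_{s_{n-2}} ⋯ t_{s_1}` (with `n = m + 2`). -/
noncomputable def cPhiOp : RingQuot (CRel r (m + 2) κ c₀ c) :=
  cX r (m + 2) κ c₀ c (Fin.last (m + 1)) *
    ((List.ofFn fun k : Fin (m + 1) =>
      cT r (m + 2) κ c₀ c (sW r k.castSucc k.succ)).reverse).prod

/-!
Write `Φ = x_n t_w`, where `w = s_{n-1} ⋯ s_1` is the permutation matrix of the cycle
`i ↦ i - 1` (mod `n`). Conjugation by `t_w` lowers the index of every `x_i`, `y_i`, `t_{ζ_i}` by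
one, so each relation reduces to moving an element past `x_n`. For `i < n`, `z_i x_n` differs from
`x_n z_i` by the reflections `t_{ζ_i^l s_{in} ζ_i^{-l}}`, which are exactly the extra terms of
`t_w φ_{i+1} t_w⁻¹` compared with `φ_i`. For `i = n` the defining relation for `y_n x_n` produces
`κ` and the terms `c_l (ζ^{-l} - ζ^{-2l}) t_{ζ_n^l}`, and discrete Fourier inversion rewrites the
latter through the idempotents `ε_{1j}` with coefficients `d_{j-1} - d_{j-2}`.
-/

open Finset

section

variable {r n κ c₀ c m}

theorem zeta_ne_zero (r : ℕ) : zeta r ≠ 0 := Complex.exp_ne_zero _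

theorem zeta_zpow_ne_zero (r : ℕ) (l : ℤ) : zeta r ^ l ≠ 0 := zpow_ne_zero l (zeta_ne_zero r)

theorem zeta_isPrimitiveRoot {r : ℕ} (hr : r ≠ 0) : IsPrimitiveRoot (zeta r) r :=
  Complex.isPrimitiveRoot_exp r hr

theorem sum_range_zeta_zpow_sub_mul {r l l' : ℕ} (hl : l < r) (hl' : l' < r) :
    ∑ j ∈ range r, zeta r ^ (((l : ℤ) - l') * j) = if l = l' then (r : ℂ) else 0 := by
  simp_rw [zpow_mul, zpow_natCast]
  split_ifs with h
  · simp [h]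
  · have hne : zeta r ^ ((l : ℤ) - l') ≠ 1 := by
      rw [Ne, (zeta_isPrimitiveRoot (by omega)).zpow_eq_one_iff_dvd, ← Nat.modEq_iff_dvd]
      exact fun hmod => h (hmod.eq_of_lt_of_lt hl' hl).symm
    rw [geom_sum_eq hne, zeta_zpow_root, sub_self, zero_div]

theorem sum_range_smul_fourier {M : Type*} [AddCommGroup M] [Module ℂ M] {r : ℕ}
    {s : Finset ℕ} (hs : s ⊆ range r) (f : ℕ → ℂ) (g : ℕ → M) :
    ∑ j ∈ range r, (∑ l ∈ s, f l * zeta r ^ ((l : ℤ) * j)) •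
        ((r : ℂ)⁻¹ • ∑ l' ∈ range r, zeta r ^ (-(l' : ℤ) * j) • g l') =
      ∑ l ∈ s, f l • g l := by
  have hterm : ∀ l ∈ s, ∀ l' ∈ range r,
      ∑ j ∈ range r, ((r : ℂ)⁻¹ * f l * (zeta r ^ ((l : ℤ) * j) * zeta r ^ (-(l' : ℤ) * j))) =
        if l' = l then f l else 0 := by
    intro l hl l' hl'
    have hl := mem_range.mp (hs hl)
    have hr : (r : ℂ) ≠ 0 := Nat.cast_ne_zero.mpr (by omega)
    simp_rw [← zpow_add₀ (zeta_ne_zero r), ← add_mul, ← sub_eq_add_neg, ← mul_sum,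
      sum_range_zeta_zpow_sub_mul hl (mem_range.mp hl'), eq_comm (a := l')]
    split_ifs
    · field_simp
    · simp
  calc _ = ∑ l ∈ s, ∑ l' ∈ range r,
        (∑ j ∈ range r, ((r : ℂ)⁻¹ * f l * (zeta r ^ ((l : ℤ) * j) * zeta r ^ (-(l' : ℤ) * j))))
          • g l' := by
        simp_rw [sum_smul, smul_sum, smul_smul]
        rw [sum_comm]
        refine sum_congr rfl fun l _ => ?_
        rw [sum_comm]
        refine sum_congr rfl fun l' _ => sum_congr rfl fun j _ => ?_
        congr 1; ring
    _ = ∑ l ∈ s, f l • g l := by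
        refine sum_congr rfl fun l hl => ?_
        rw [sum_congr rfl fun l' hl' => by rw [hterm l hl l' hl']]
        simp_rw [ite_smul, zero_smul]
        rw [sum_ite_eq', if_pos (hs hl)]

theorem dpar_sub_one_sub_dpar_sub_two (j : ℤ) :
    dpar r c (j - 1) - dpar r c (j - 2) =
      ∑ l ∈ Ico 1 r, c l * (zeta r ^ (-(l : ℤ)) - zeta r ^ (-2 * (l : ℤ))) *
        zeta r ^ ((l : ℤ) * j) := by
  rw [dpar, dpar, ← sum_sub_distrib]
  refine sum_congr rfl fun l _ => ?_
  rw [show (l : ℤ) * (j - 1) = -l + l * j by ring, show (l : ℤ) * (j - 2) = -2 * l + l * j by ring,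
    zpow_add₀ (zeta_ne_zero r), zpow_add₀ (zeta_ne_zero r)]
  ring

theorem sum_dpar_smul_cEps (i : Fin n) :
    ∑ j ∈ range r, (dpar r c ((j : ℤ) - 1) - dpar r c ((j : ℤ) - 2)) • cEps r n κ c₀ c i j =
      ∑ l ∈ Ico 1 r, (c l * (zeta r ^ (-(l : ℤ)) - zeta r ^ (-2 * (l : ℤ)))) •
        cT r n κ c₀ c (zetaW r i l) := by
  simp_rw [dpar_sub_one_sub_dpar_sub_two, cEps]
  exact sum_range_smul_fourier (fun l hl => mem_range.mpr (mem_Ico.mp hl).2) _ _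

def monomialMatrix {n : ℕ} (σ : Equiv.Perm (Fin n)) (a : Fin n → ℂ) :
    Matrix (Fin n) (Fin n) ℂ :=
  Matrix.of fun i j => if i = σ j then a j else 0

theorem monomialMatrix_mul {n : ℕ} (σ τ : Equiv.Perm (Fin n)) (a b : Fin n → ℂ) :
    monomialMatrix σ a * monomialMatrix τ b = monomialMatrix (σ * τ) (fun j => a (τ j) * b j) := by
  ext i j
  rw [Matrix.mul_apply, sum_eq_single (τ j) (fun k _ hk => by simp [monomialMatrix, hk])
    (by simp)]
  by_cases h : i = σ (τ j) <;> simp [monomialMatrix, h]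

theorem monomialMatrix_one {n : ℕ} : monomialMatrix (n := n) 1 1 = 1 := by
  ext i j
  by_cases h : i = j <;> simp [monomialMatrix, Matrix.one_apply, h]

theorem monomialMatrix_inv {n : ℕ} (σ : Equiv.Perm (Fin n)) {a : Fin n → ℂ}
    (ha : ∀ i, a i ≠ 0) :
    (monomialMatrix σ a)⁻¹ = monomialMatrix σ⁻¹ (fun j => (a (σ⁻¹ j))⁻¹) := by
  refine Matrix.inv_eq_left_inv ?_
  rw [monomialMatrix_mul, inv_mul_cancel, ← monomialMatrix_one]
  congr 1
  ext i
  simp [ha]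

theorem isGMonomial_monomialMatrix {n : ℕ} (σ : Equiv.Perm (Fin n)) {a : Fin n → ℂ}
    (ha : ∀ i, a i ^ r = 1) : IsGMonomial r n (monomialMatrix σ a) :=
  ⟨σ, a, ha, fun _ _ => rfl⟩

theorem zmat_eq_monomialMatrix (i : Fin n) (l : ℤ) :
    zmat r n i l = monomialMatrix 1 (fun b => if b = i then zeta r ^ l else 1) := by
  ext a b
  by_cases h : a = b
  · subst h; simp [zmat, monomialMatrix]
  · simp [zmat, monomialMatrix, h]

theorem smat_eq_monomialMatrix (i j : Fin n) : smat i j = monomialMatrix (Equiv.swap i j) 1 :=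
  rfl

noncomputable instance : Monoid (GMon r n) where
  mul w v := ⟨w.1 * v.1, w.2.mul v.2⟩
  one := ⟨1, monomialMatrix_one (n := n) ▸ isGMonomial_monomialMatrix 1 fun _ => one_pow r⟩
  mul_assoc a b c := Subtype.ext (mul_assoc a.1 b.1 c.1)
  one_mul a := Subtype.ext (one_mul a.1)
  mul_one a := Subtype.ext (mul_one a.1)

theorem GMon.val_mul (w v : GMon r n) : (w * v).1 = w.1 * v.1 := rfl

noncomputable def permW (r : ℕ) {n : ℕ} : Equiv.Perm (Fin n) →* GMon r n where
  toFun σ := ⟨monomialMatrix σ 1, isGMonomial_monomialMatrix σ fun _ => one_pow r⟩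
  map_one' := Subtype.ext monomialMatrix_one
  map_mul' σ τ := Subtype.ext <| by
    change _ = monomialMatrix σ 1 * monomialMatrix τ 1
    rw [monomialMatrix_mul]
    simp [Pi.one_def]

theorem permW_val (σ : Equiv.Perm (Fin n)) : (permW r σ).1 = monomialMatrix σ 1 := rfl

theorem zetaW_val (i : Fin n) (l : ℤ) :
    (zetaW r i l).1 = monomialMatrix 1 (fun b => if b = i then zeta r ^ l else 1) :=
  zmat_eq_monomialMatrix i l

theorem reflW_val {i j : Fin n} (hij : i ≠ j) (l : ℤ) :
    (reflW r i j l).1 = monomialMatrix (Equiv.swap i j)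
      (fun b => if b = i then zeta r ^ (-l) else if b = j then zeta r ^ l else 1) := by
  change zmat r n i l * smat i j * zmat r n i (-l) = _
  rw [zmat_eq_monomialMatrix, zmat_eq_monomialMatrix, smat_eq_monomialMatrix,
    monomialMatrix_mul, monomialMatrix_mul, one_mul, mul_one]
  congr 1
  ext b
  by_cases hbi : b = i
  · subst hbi
    simp [hij.symm]
  · by_cases hbj : b = j
    · subst hbj
      simp [hbi]
    · simp [Equiv.swap_apply_of_ne_of_ne hbi hbj, hbi, hbj]

theorem permW_mul_zetaW (σ : Equiv.Perm (Fin n)) (i : Fin n) (l : ℤ) :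
    permW r σ * zetaW r i l = zetaW r (σ i) l * permW r σ := by
  refine Subtype.ext ?_
  simp only [GMon.val_mul, permW_val, zetaW_val, monomialMatrix_mul, one_mul, mul_one]
  congr 1
  ext b
  simp [σ.injective.eq_iff]

theorem permW_mul_reflW (σ : Equiv.Perm (Fin n)) {i j : Fin n} (hij : i ≠ j) (l : ℤ) :
    permW r σ * reflW r i j l = reflW r (σ i) (σ j) l * permW r σ := by
  refine Subtype.ext ?_
  simp only [GMon.val_mul, permW_val, reflW_val hij, reflW_val (σ.injective.ne hij),
    monomialMatrix_mul, Equiv.swap_apply_apply]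
  congr 1
  · group
  · ext b
    simp [σ.injective.eq_iff]

local notation "𝐱" => cX r _ κ c₀ c
local notation "𝐲" => cY r _ κ c₀ c
local notation "𝐭" => cT r _ κ c₀ c
local notation "𝐳" => cz r _ κ c₀ c

theorem cT_one : 𝐭 (1 : GMon r n) = 1 := by
  rw [cT, RingQuot.mkAlgHom_rel ℂ (CRel.t_one (κ := κ) (c₀ := c₀) (c := c) (1 : GMon r n) rfl),
    map_one]

theorem cT_mul (w v : GMon r n) : 𝐭 (w * v) = 𝐭 w * 𝐭 v := by
  rw [cT, RingQuot.mkAlgHom_rel ℂ (CRel.t_mul (κ := κ) (c₀ := c₀) (c := c) (w * v) w v rfl),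
    map_mul, ← cT, ← cT]

noncomputable def cTHom (r n : ℕ) (κ c₀ : ℂ) (c : ℕ → ℂ) :
    GMon r n →* RingQuot (CRel r n κ c₀ c) where
  toFun := cT r n κ c₀ c
  map_one' := cT_one
  map_mul' := cT_mul

theorem cT_mul_cX_of_val_eq {w : GMon r n} {σ : Equiv.Perm (Fin n)} {a : Fin n → ℂ}
    (hw : w.1 = monomialMatrix σ a) (ha : ∀ i, a i ≠ 0) (i : Fin n) :
    𝐭 w * 𝐱 i = (a i)⁻¹ • (𝐱 (σ i) * 𝐭 w) := by
  have h := RingQuot.mkAlgHom_rel ℂ (CRel.t_x (κ := κ) (c₀ := c₀) (c := c) w i)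
  simp only [map_mul, map_sum, map_smul, hw, monomialMatrix_inv σ ha] at h
  rw [cT, cX, h, sum_eq_single (σ i)
    (fun j _ hj => by simp [monomialMatrix, Equiv.eq_symm_apply, Ne.symm hj]) (by simp)]
  simp [monomialMatrix, cX]

theorem cT_mul_cY_of_val_eq {w : GMon r n} {σ : Equiv.Perm (Fin n)} {a : Fin n → ℂ}
    (hw : w.1 = monomialMatrix σ a) (i : Fin n) :
    𝐭 w * 𝐲 i = a i • (𝐲 (σ i) * 𝐭 w) := by
  have h := RingQuot.mkAlgHom_rel ℂ (CRel.t_y (κ := κ) (c₀ := c₀) (c := c) w i)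
  simp only [map_mul, map_sum, map_smul, hw] at h
  rw [cT, cY, h, sum_eq_single (σ i) (fun j _ hj => by simp [monomialMatrix, hj]) (by simp)]
  simp [monomialMatrix, cY]

theorem cX_mul_cX_comm (i j : Fin n) : 𝐱 i * 𝐱 j = 𝐱 j * 𝐱 i := by
  simpa only [map_mul, cX] using
    RingQuot.mkAlgHom_rel ℂ (CRel.xx (r := r) (κ := κ) (c₀ := c₀) (c := c) i j)

theorem cY_mul_cX_of_ne {i j : Fin n} (hij : i ≠ j) :
    𝐲 i * 𝐱 j = 𝐱 j * 𝐲 i +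
      c₀ • ∑ l ∈ range r, zeta r ^ (-(l : ℤ)) • 𝐭 (reflW r i j l) := by
  simpa only [map_mul, map_add, map_smul, map_sum, cX, cY, cT] using
    RingQuot.mkAlgHom_rel ℂ (CRel.yx_ne (r := r) (κ := κ) (c₀ := c₀) (c := c) i j hij)

theorem cY_mul_cX_self (i : Fin n) :
    𝐲 i * 𝐱 i = 𝐱 i * 𝐲 i + κ • (1 : RingQuot (CRel r n κ c₀ c))
      - ∑ l ∈ Ico 1 r, (c l * (1 - zeta r ^ (-(l : ℤ)))) • 𝐭 (zetaW r i l)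
      - c₀ • ∑ j ∈ univ.erase i, ∑ l ∈ range r, 𝐭 (reflW r i j l) := by
  simpa only [map_mul, map_add, map_sub, map_smul, map_sum, map_one, cX, cY, cT] using
    RingQuot.mkAlgHom_rel ℂ (CRel.yx_eq (r := r) (κ := κ) (c₀ := c₀) (c := c) i)

theorem cT_zetaW_mul_cX_of_ne {i j : Fin n} (hji : j ≠ i) (l : ℤ) :
    𝐭 (zetaW r i l) * 𝐱 j = 𝐱 j * 𝐭 (zetaW r i l) := by
  rw [cT_mul_cX_of_val_eq (zetaW_val i l) (fun b => by split_ifs <;> simp [zeta_zpow_ne_zero])]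
  simp [hji]

theorem cT_zetaW_mul_cX_self (i : Fin n) (l : ℤ) :
    𝐭 (zetaW r i l) * 𝐱 i = zeta r ^ (-l) • (𝐱 i * 𝐭 (zetaW r i l)) := by
  rw [cT_mul_cX_of_val_eq (zetaW_val i l) (fun b => by split_ifs <;> simp [zeta_zpow_ne_zero])]
  simp

theorem cT_reflW_mul_cX_self {i j : Fin n} (hij : i ≠ j) (l : ℤ) :
    𝐭 (reflW r i j l) * 𝐱 i = zeta r ^ l • (𝐱 j * 𝐭 (reflW r i j l)) := by
  rw [cT_mul_cX_of_val_eq (reflW_val hij l) (fun b => by split_ifs <;> simp [zeta_zpow_ne_zero])]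
  simp

theorem cT_reflW_mul_cX_of_ne_of_ne {i j b : Fin n} (hij : i ≠ j) (hbi : b ≠ i) (hbj : b ≠ j)
    (l : ℤ) : 𝐭 (reflW r i j l) * 𝐱 b = 𝐱 b * 𝐭 (reflW r i j l) := by
  rw [cT_mul_cX_of_val_eq (reflW_val hij l) (fun b => by split_ifs <;> simp [zeta_zpow_ne_zero])]
  simp [hbi, hbj, Equiv.swap_apply_of_ne_of_ne hbi hbj]

theorem cT_permW_mul_cX (σ : Equiv.Perm (Fin n)) (i : Fin n) :
    𝐭 (permW r σ) * 𝐱 i = 𝐱 (σ i) * 𝐭 (permW r σ) := by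
  simpa using cT_mul_cX_of_val_eq (permW_val σ) (fun _ => one_ne_zero) i

theorem cT_permW_mul_cY (σ : Equiv.Perm (Fin n)) (i : Fin n) :
    𝐭 (permW r σ) * 𝐲 i = 𝐲 (σ i) * 𝐭 (permW r σ) := by
  simpa using cT_mul_cY_of_val_eq (permW_val σ) i

theorem formPerm_finRange (n : ℕ) : (List.finRange n).formPerm = finRotate n := by
  ext i
  have hi : i = (List.finRange n)[(i : ℕ)]'(by simp) := by simp
  rw [hi, List.formPerm_apply_getElem _ (List.nodup_finRange n)]
  simp [Fin.val_add]

theorem prod_ofFn_swap_castSucc_succ (n : ℕ) :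
    (List.ofFn fun k : Fin n => Equiv.swap k.castSucc k.succ).prod = finRotate (n + 1) := by
  rw [← formPerm_finRange, List.formPerm]
  congr 1
  exact List.ext_getElem (by simp) fun k _ _ => by simp

theorem prod_reverse_ofFn_swap_castSucc_succ (n : ℕ) :
    (List.ofFn fun k : Fin n => Equiv.swap k.castSucc k.succ).reverse.prod =
      (finRotate (n + 1)).symm := by
  rw [← Equiv.Perm.inv_def, ← prod_ofFn_swap_castSucc_succ, List.prod_inv_reverse,
    List.map_ofFn]
  simp [Function.comp_def, Equiv.swap_inv]

theorem finRotate_symm_succ {n : ℕ} (k : Fin (n + 1)) :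
    (finRotate (n + 2)).symm k.succ = k.castSucc := by
  rw [Equiv.symm_apply_eq, finRotate_apply, Fin.coeSucc_eq_succ]

theorem finRotate_symm_zero (n : ℕ) : (finRotate (n + 1)).symm 0 = Fin.last n := by
  rw [Equiv.symm_apply_eq, finRotate_last]

theorem image_finRotate_symm_filter_lt_succ {n : ℕ} (k : Fin (n + 1)) :
    (univ.filter (· < k.succ)).image (finRotate (n + 2)).symm =
      insert (Fin.last (n + 1)) (univ.filter (· < k.castSucc)) := by
  ext j
  rw [← Equiv.coe_toEmbedding, ← map_eq_image, mem_map_equiv, Equiv.symm_symm]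
  induction j using Fin.lastCases with
  | last => simp [Fin.succ_pos]
  | cast i =>
    rw [finRotate_apply, Fin.coeSucc_eq_succ]
    simp [Fin.castSucc_ne_last, Fin.succ_lt_succ_iff]

theorem cPhiOp_eq :
    cPhiOp r κ c₀ c m = 𝐱 (Fin.last (m + 1)) * 𝐭 (permW r (finRotate (m + 2)).symm) := by
  rw [cPhiOp, ← prod_reverse_ofFn_swap_castSucc_succ, map_list_prod]
  change _ = _ * cTHom r (m + 2) κ c₀ c _
  rw [map_list_prod, List.map_reverse, List.map_reverse, List.map_ofFn, List.map_ofFn]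
  rfl

theorem cz_mul_cX_of_lt {i j : Fin n} (hij : i < j) :
    𝐳 i * 𝐱 j = 𝐱 j * (𝐳 i + c₀ • ∑ l ∈ range r, 𝐭 (reflW r i j l)) := by
  have hyx : 𝐲 i * 𝐱 i * 𝐱 j =
      𝐱 j * (𝐲 i * 𝐱 i) + c₀ • ∑ l ∈ range r, 𝐱 j * 𝐭 (reflW r i j l) := by
    rw [mul_assoc, cX_mul_cX_comm, ← mul_assoc, cY_mul_cX_of_ne hij.ne, add_mul, mul_assoc,
      smul_mul_assoc, sum_mul]
    congr 2
    refine sum_congr rfl fun l _ => ?_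
    rw [smul_mul_assoc, cT_reflW_mul_cX_self hij.ne, smul_smul,
      ← zpow_add₀ (zeta_ne_zero r), neg_add_cancel, zpow_zero, one_smul]
  have hphi : cPhi r n κ c₀ c i * 𝐱 j = 𝐱 j * cPhi r n κ c₀ c i := by
    simp only [cPhi, sum_mul, mul_sum]
    refine sum_congr rfl fun k hk => sum_congr rfl fun l _ => ?_
    have hki : k < i := (mem_filter.mp hk).2
    exact cT_reflW_mul_cX_of_ne_of_ne hki.ne' hij.ne' (hki.trans hij).ne' l
  rw [cz, add_mul, smul_mul_assoc, hyx, hphi, mul_add, mul_add, mul_smul_comm, mul_smul_comm,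
    mul_sum]
  abel

theorem cT_finRotate_symm_mul_cz_succ {n : ℕ} (k : Fin (n + 1)) :
    𝐭 (permW r (finRotate (n + 2)).symm) * 𝐳 k.succ =
      (𝐳 k.castSucc + c₀ • ∑ l ∈ range r, 𝐭 (reflW r k.castSucc (Fin.last (n + 1)) l)) *
        𝐭 (permW r (finRotate (n + 2)).symm) := by
  set p := (finRotate (n + 2)).symm
  have hpk : p k.succ = k.castSucc := finRotate_symm_succ k
  have hyx :
      𝐭 (permW r p) * (𝐲 k.succ * 𝐱 k.succ) = 𝐲 k.castSucc * 𝐱 k.castSucc * 𝐭 (permW r p) := by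
    rw [← mul_assoc, cT_permW_mul_cY, mul_assoc, cT_permW_mul_cX, ← mul_assoc, hpk]
  have hphi : 𝐭 (permW r p) * cPhi r _ κ c₀ c k.succ =
      (∑ l ∈ range r, 𝐭 (reflW r k.castSucc (Fin.last (n + 1)) l) + cPhi r _ κ c₀ c k.castSucc) *
        𝐭 (permW r p) := by
    have hrefl : ∀ j < k.succ, 𝐭 (permW r p) * ∑ l ∈ range r, 𝐭 (reflW r k.succ j l) =
        (∑ l ∈ range r, 𝐭 (reflW r k.castSucc (p j) l)) * 𝐭 (permW r p) := by
      intro j hj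
      simp only [mul_sum, sum_mul, ← cT_mul, permW_mul_reflW p hj.ne', hpk]
    rw [cPhi, mul_sum, sum_congr rfl fun j hj => hrefl j (mem_filter.mp hj).2, ← sum_mul,
      ← sum_image (f := fun j => ∑ l ∈ range r, 𝐭 (reflW r k.castSucc j l))
        fun _ _ _ _ h => p.injective h,
      image_finRotate_symm_filter_lt_succ, sum_insert (by simp [Fin.le_last]), cPhi]
  rw [cz, cz, mul_add, mul_smul_comm, hyx, hphi]
  rw [add_mul, smul_add, add_mul, add_mul, smul_mul_assoc, smul_mul_assoc]
  abel

theorem cz_last (n : ℕ) :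
    𝐳 (Fin.last n) = 𝐱 (Fin.last n) * 𝐲 (Fin.last n) + κ • (1 : RingQuot (CRel r _ κ c₀ c))
      - ∑ l ∈ Ico 1 r, (c l * (1 - zeta r ^ (-(l : ℤ)))) • 𝐭 (zetaW r (Fin.last n) l) := by
  -- `φ_n` runs over all `j ≠ n`, so `c₀ φ_n` cancels the reflection terms of `y_n x_n`.
  have hlt : univ.filter (· < Fin.last n) = univ.erase (Fin.last n) := by
    ext j
    simp [Fin.lt_last_iff_ne_last]
  rw [cz, cY_mul_cX_self, cPhi, hlt, sub_add_cancel]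

theorem cz_zero (n : ℕ) : 𝐳 (0 : Fin (n + 1)) = 𝐲 0 * 𝐱 0 := by
  rw [cz, cPhi, filter_false_of_mem fun j _ => Fin.not_lt_zero j, sum_empty, smul_zero, add_zero]

theorem cz_last_mul_cX_last (n : ℕ) :
    𝐳 (Fin.last n) * 𝐱 (Fin.last n) = 𝐱 (Fin.last n) *
      (𝐲 (Fin.last n) * 𝐱 (Fin.last n) + κ • 1 - ∑ l ∈ Ico 1 r,
        (c l * (zeta r ^ (-(l : ℤ)) - zeta r ^ (-2 * (l : ℤ)))) • 𝐭 (zetaW r (Fin.last n) l)) := by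
  have hcoeff : ∀ l : ℕ, c l * (1 - zeta r ^ (-(l : ℤ))) * zeta r ^ (-(l : ℤ)) =
      c l * (zeta r ^ (-(l : ℤ)) - zeta r ^ (-2 * (l : ℤ))) := fun l => by
    rw [show -2 * (l : ℤ) = -l + -l by ring, zpow_add₀ (zeta_ne_zero r)]
    ring
  rw [cz_last, sub_mul, add_mul, sum_mul, smul_mul_assoc, one_mul, mul_assoc, mul_sub, mul_add,
    mul_smul_comm, mul_one, mul_sum]
  congr 1
  refine sum_congr rfl fun l _ => ?_
  rw [smul_mul_assoc, cT_zetaW_mul_cX_self, smul_smul, hcoeff, mul_smul_comm]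

theorem cT_permW_mul_cY_mul_cX_add_sub (σ : Equiv.Perm (Fin n)) (i : Fin n) (s : Finset ℕ)
    (e : ℕ → ℂ) :
    𝐭 (permW r σ) * (𝐲 i * 𝐱 i + κ • 1 - ∑ l ∈ s, e l • 𝐭 (zetaW r i l)) =
      (𝐲 (σ i) * 𝐱 (σ i) + κ • 1 - ∑ l ∈ s, e l • 𝐭 (zetaW r (σ i) l)) * 𝐭 (permW r σ) := by
  rw [mul_sub, mul_add, ← mul_assoc, cT_permW_mul_cY, mul_assoc, cT_permW_mul_cX, mul_smul_comm,
    mul_one, mul_sum, sub_mul, add_mul, ← mul_assoc, smul_mul_assoc, one_mul, sum_mul]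
  simp only [mul_smul_comm, smul_mul_assoc, ← cT_mul, permW_mul_zetaW]

theorem cz_castSucc_mul_cPhiOp (k : Fin (m + 1)) :
    𝐳 k.castSucc * cPhiOp r κ c₀ c m = cPhiOp r κ c₀ c m * 𝐳 k.succ := by
  rw [cPhiOp_eq, ← mul_assoc, cz_mul_cX_of_lt (Fin.castSucc_lt_last k), mul_assoc, mul_assoc,
    cT_finRotate_symm_mul_cz_succ]

theorem cz_last_mul_cPhiOp :
    𝐳 (Fin.last (m + 1)) * cPhiOp r κ c₀ c m = cPhiOp r κ c₀ c m *
      (𝐳 0 + κ • 1 - ∑ j ∈ range r,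
        (dpar r c ((j : ℤ) - 1) - dpar r c ((j : ℤ) - 2)) • cEps r (m + 2) κ c₀ c 0 j) := by
  rw [cPhiOp_eq, ← mul_assoc, cz_last_mul_cX_last, sum_dpar_smul_cEps, cz_zero, mul_assoc,
    mul_assoc, cT_permW_mul_cY_mul_cX_add_sub, finRotate_symm_zero]

theorem cT_zetaW_castSucc_mul_cPhiOp (k : Fin (m + 1)) :
    𝐭 (zetaW r k.castSucc 1) * cPhiOp r κ c₀ c m = cPhiOp r κ c₀ c m * 𝐭 (zetaW r k.succ 1) := by
  rw [cPhiOp_eq, ← mul_assoc, cT_zetaW_mul_cX_of_ne (Fin.castSucc_lt_last k).ne', mul_assoc,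
    ← cT_mul, ← finRotate_symm_succ, ← permW_mul_zetaW, cT_mul, mul_assoc]

theorem cT_zetaW_last_mul_cPhiOp :
    𝐭 (zetaW r (Fin.last (m + 1)) 1) * cPhiOp r κ c₀ c m =
      (zeta r)⁻¹ • (cPhiOp r κ c₀ c m * 𝐭 (zetaW r 0 1)) := by
  rw [cPhiOp_eq, ← mul_assoc, cT_zetaW_mul_cX_self, smul_mul_assoc, mul_assoc, ← cT_mul,
    ← finRotate_symm_zero, ← permW_mul_zetaW, cT_mul, ← mul_assoc, zpow_neg_one]

end

theorem stmt13 :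
    (∀ k : Fin (m + 1),
      cz r (m + 2) κ c₀ c k.castSucc * cPhiOp r κ c₀ c m =
        cPhiOp r κ c₀ c m * cz r (m + 2) κ c₀ c k.succ)
    ∧ (cz r (m + 2) κ c₀ c (Fin.last (m + 1)) * cPhiOp r κ c₀ c m =
        cPhiOp r κ c₀ c m *
          (cz r (m + 2) κ c₀ c 0 + κ • 1 -
            ∑ j ∈ Finset.range r,
              (dpar r c ((j : ℤ) - 1) - dpar r c ((j : ℤ) - 2)) •
                cEps r (m + 2) κ c₀ c 0 (j : ℤ)))
    ∧ (∀ k : Fin (m + 1),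
      cT r (m + 2) κ c₀ c (zetaW r k.castSucc 1) * cPhiOp r κ c₀ c m =
        cPhiOp r κ c₀ c m * cT r (m + 2) κ c₀ c (zetaW r k.succ 1))
    ∧ (cT r (m + 2) κ c₀ c (zetaW r (Fin.last (m + 1)) 1) * cPhiOp r κ c₀ c m =
        (zeta r)⁻¹ • (cPhiOp r κ c₀ c m * cT r (m + 2) κ c₀ c (zetaW r 0 1))) :=
  ⟨cz_castSucc_mul_cPhiOp, cz_last_mul_cPhiOp, cT_zetaW_castSucc_mul_cPhiOp,
    cT_zetaW_last_mul_cPhiOp⟩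
end

section
/- Let A be the n × n matrix over ℂ[x_1, …, x_n] whose (i, j) entry for 1 ≤ i ≤ n−1 is x_j^{(i−1)r + m̄}, and whose (n, j) entry is x_j^{m′} · ∏_{k ≠ j} x_k^{r − m̄ + m′}. Then det(A) = (−1)^{n−1} (x_1 x_2 ⋯ x_n)^{m′} · ∏_{1 ≤ i < j ≤ n} (x_j^r − x_i^r). -/
open MvPolynomial

/-- With `m̄ = m % r` and `m′ = m % (r/p)`, the determinant of the matrix
whose first `n-1` rows are `x_j^{(i-1)r + m̄}` and whose last row is
`x_j^{m′} ∏_{k ≠ j} x_k^{r - m̄ + m′}` equals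
`(-1)^{n-1} (x_1 ⋯ x_n)^{m′} ∏_{i<j} (x_j^r - x_i^r)`. -/
theorem stmt19 (n r p m : ℕ) (hn : 1 ≤ n) (hr : 1 ≤ r) (hp : 1 ≤ p) (hpr : p ∣ r)
    (hm : 0 < m) (hrm : ¬ r ∣ m) :
    Matrix.det (Matrix.of fun i j : Fin n =>
        if (i : ℕ) = n - 1 then
          (X j : MvPolynomial (Fin n) ℂ) ^ (m % (r / p)) *
            ∏ k ∈ Finset.univ.erase j, (X k : MvPolynomial (Fin n) ℂ) ^ (r - m % r + m % (r / p))
        else (X j : MvPolynomial (Fin n) ℂ) ^ ((i : ℕ) * r + m % r)) =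
      (-1) ^ (n - 1) * (∏ i : Fin n, (X i : MvPolynomial (Fin n) ℂ)) ^ (m % (r / p)) *
        ∏ i : Fin n, ∏ j ∈ Finset.univ.filter (fun j : Fin n => i < j),
          ((X j : MvPolynomial (Fin n) ℂ) ^ r - (X i) ^ r) := by
  obtain ⟨N, rfl⟩ : ∃ N, n = N + 1 := ⟨n - 1, (Nat.succ_pred_eq_of_pos hn).symm⟩
  simp only [Nat.add_sub_cancel]
  set R := MvPolynomial (Fin (N + 1)) ℂ
  set mb := m % r with hmb
  set mp := m % (r / p) with hmp
  have hmbr : mb ≤ r := le_of_lt (Nat.mod_lt _ hr)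
  set v : Fin (N + 1) → R := fun j => X j ^ r with hv
  set A : Matrix (Fin (N + 1)) (Fin (N + 1)) R := Matrix.of fun i j =>
    if (i : ℕ) = N then
      (X j : R) ^ mp * ∏ k ∈ Finset.univ.erase j, (X k : R) ^ (r - mb + mp)
    else (X j : R) ^ ((i : ℕ) * r + mb) with hA
  set d : Fin (N + 1) → R := fun j => X j ^ (r - mb) with hd
  set c : R := (∏ i : Fin (N + 1), (X i : R)) ^ (r - mb + mp) with hc
  set V : Matrix (Fin (N + 1)) (Fin (N + 1)) R := Matrix.transpose (Matrix.vandermonde v) with hV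
  set D : Matrix (Fin (N + 1)) (Fin (N + 1)) R := V.submatrix (finRotate (N + 1)) id with hD
  have key : A * Matrix.diagonal d =
      Matrix.diagonal (fun i : Fin (N + 1) => if (i : ℕ) = N then c else 1) * D := by
    apply Matrix.ext
    intro i j
    rw [Matrix.mul_diagonal, Matrix.diagonal_mul]
    by_cases hi : (i : ℕ) = N
    · have hil : i = Fin.last N := Fin.ext hi
      have : D i j = 1 := by
        simp [hD, hV, hil, finRotate_succ_apply, Matrix.vandermonde]
      rw [this, hA, hd]
      simp only [Matrix.of_apply, hi, if_true, mul_one]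
      have hjmem : j ∈ (Finset.univ : Finset (Fin (N + 1))) := Finset.mem_univ j
      calc ((X j : R) ^ mp * ∏ k ∈ Finset.univ.erase j, (X k : R) ^ (r - mb + mp)) *
            X j ^ (r - mb)
          = ((X j : R) ^ mp * X j ^ (r - mb)) *
              ∏ k ∈ Finset.univ.erase j, (X k : R) ^ (r - mb + mp) := by ring
        _ = (X j : R) ^ (r - mb + mp) *
              ∏ k ∈ Finset.univ.erase j, (X k : R) ^ (r - mb + mp) := by
            rw [← pow_add, Nat.add_comm mp (r - mb)]
        _ = ∏ k : Fin (N + 1), (X k : R) ^ (r - mb + mp) :=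
            Finset.mul_prod_erase Finset.univ (fun k => (X k : R) ^ (r - mb + mp)) hjmem
        _ = c := by rw [hc, ← Finset.prod_pow]
    · have hilt : (i : ℕ) < N := lt_of_le_of_ne (Nat.lt_succ_iff.mp i.isLt) hi
      have hrot : ((finRotate (N + 1) i : Fin (N + 1)) : ℕ) = (i : ℕ) + 1 := by
        rw [finRotate_succ_apply]
        exact Fin.val_add_one_of_lt (by simpa [Fin.lt_iff_val_lt_val] using hilt)
      have : D i j = (X j : R) ^ (((i : ℕ) + 1) * r) := by
        simp only [hD, hV, Matrix.submatrix_apply, Matrix.transpose_apply, Matrix.vandermonde,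
          Matrix.of_apply, id, hrot, hv]
        rw [← pow_mul, mul_comm r]
      rw [this, hA, hd]
      simp only [Matrix.of_apply, hi, if_false, one_mul]
      rw [← pow_add, Nat.add_assoc, Nat.add_sub_cancel' hmbr, Nat.succ_mul]
  have hdetD : D.det = ((-1) ^ N : R) * ∏ i : Fin (N + 1), ∏ j ∈ Finset.Ioi i, (v j - v i) := by
    rw [hD, Matrix.det_permute, sign_finRotate, hV, Matrix.det_transpose,
      Matrix.det_vandermonde]
    push_cast
    ring
  have hdiagdet : (Matrix.diagonal (fun i : Fin (N + 1) =>
      if (i : ℕ) = N then c else 1)).det = c := by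
    rw [Matrix.det_diagonal]
    have : ∀ i : Fin (N + 1), (if (i : ℕ) = N then c else 1) =
        (if i = Fin.last N then c else 1) := by
      intro i; congr 1; simp [Fin.ext_iff]
    simp_rw [this]
    simp
  have hIoi : ∀ i : Fin (N + 1), Finset.Ioi i = Finset.univ.filter (fun j => i < j) := by
    intro i; ext j; simp
  have hP : A.det * (∏ i : Fin (N + 1), (X i : R)) ^ (r - mb) =
      c * (((-1) ^ N : R) * ∏ i : Fin (N + 1), ∏ j ∈ Finset.Ioi i, (v j - v i)) := by
    have := congrArg Matrix.det key
    rw [Matrix.det_mul, Matrix.det_mul, Matrix.det_diagonal, hdiagdet, hdetD] at this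
    rw [← this, Finset.prod_pow]
  have hPne : ((∏ i : Fin (N + 1), (X i : R)) ^ (r - mb) : R) ≠ 0 := by
    apply pow_ne_zero
    rw [Finset.prod_ne_zero_iff]
    intro i _
    exact MvPolynomial.X_ne_zero i
  apply mul_right_cancel₀ hPne
  rw [hP, hc, pow_add]
  simp_rw [hIoi] at *
  ring
end
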